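/- Let (A_t)_{t∈G} and (B_t)_{t∈G} be concrete Fell bundles over a group G in a C*-algebra L, and let (X_t)_{t∈G} be a concrete strong (A_t)–(B_t) equivalence bundle. Then (A_t) is saturated (A_r⋅A_s = A_{rs} for all r,s) if and only if (B_t) is saturated (B_r⋅B_s = B_{rs} for all r,s). In other words, saturation of Fell bundles is invariant under strong equivalence. -/

import Mathlib

/-- The closed linear span (over `ℂ`) of a set in a normed `ℂ`-algebra. -/
noncomputable def closedSpan {L : Type*} [NormedRing L] [NormedAlgebra ℂ L]
    (S : Set L) : Submodule ℂ L :=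
  (Submodule.span ℂ S).topologicalClosure

/-- `S⋅T`: the closed linear span of all products `s * t` with `s ∈ S`, `t ∈ T`. -/
noncomputable def mulSpan {L : Type*} [NormedRing L] [NormedAlgebra ℂ L]
    (S T : Set L) : Submodule ℂ L :=
  closedSpan (Set.image2 (· * ·) S T)

/-! In a C⋆-algebra every `x` lies in the closed span of the `x (x⋆x)ᵏ⁺¹`, so a subspace `M` with
`M M⋆ M ⊆ M` satisfies `M ⊆ (M⋅M⋆)⋅M`. Combined with strong fullness and associativity of
`⋅` this gives `X_t ⊆ A_t⋅X_e`, `X_t ⊆ X_e⋅B_t` and `B_t ⊆ X_{t⁻¹}⋆⋅X_e`. If `A` is saturated then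
`X_{rs} ⊆ A_r⋅A_s⋅X_e ⊆ A_r⋅X_s`, hence
`B_{rs} ⊆ X_{(rs)⁻¹}⋆⋅X_e ⊆ X_{r⁻¹}⋆⋅A_s⋅X_e ⊆ X_{r⁻¹}⋆⋅X_s ⊆ X_{r⁻¹}⋆⋅X_e⋅B_s ⊆ B_r⋅B_s`.
The converse is the same argument for the dual `B`–`A` equivalence bundle `t ↦ X_{t⁻¹}⋆`. -/

open Set Filter Topology

section ClosedSpan

variable {L : Type*} [NormedRing L] [NormedAlgebra ℂ L]

lemma isClosed_closedSpan (S : Set L) : IsClosed (closedSpan S : Set L) :=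
  Submodule.isClosed_topologicalClosure _

lemma subset_closedSpan (S : Set L) : S ⊆ closedSpan S :=
  Submodule.subset_span.trans (Submodule.le_topologicalClosure _)

lemma closedSpan_le {S : Set L} {M : Submodule ℂ L} (hM : IsClosed (M : Set L))
    (h : S ⊆ M) : closedSpan S ≤ M :=
  Submodule.topologicalClosure_minimal _ (Submodule.span_le.2 h) hM

lemma map_mem_of_mem_closedSpan (f : L →L[ℂ] L) {S : Set L} {M : Submodule ℂ L}
    (hM : IsClosed (M : Set L)) (h : ∀ s ∈ S, f s ∈ M) {x : L} (hx : x ∈ closedSpan S) :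
    f x ∈ M :=
  closedSpan_le (M := M.comap (f : L →ₗ[ℂ] L)) (hM.preimage f.continuous) h hx

lemma mem_mulSpan {S T : Set L} {s t : L} (hs : s ∈ S) (ht : t ∈ T) : s * t ∈ mulSpan S T :=
  subset_closedSpan _ (mem_image2_of_mem hs ht)

lemma mulSpan_le {S T : Set L} {M : Submodule ℂ L} (hM : IsClosed (M : Set L))
    (h : ∀ s ∈ S, ∀ t ∈ T, s * t ∈ M) : mulSpan S T ≤ M :=
  closedSpan_le hM (by rintro _ ⟨s, hs, t, ht, rfl⟩; exact h s hs t ht)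

lemma mulSpan_mono {S S' T T' : Set L} (hS : S ⊆ S') (hT : T ⊆ T') :
    mulSpan S T ≤ mulSpan S' T' :=
  mulSpan_le (isClosed_closedSpan _) fun _ hs _ ht => mem_mulSpan (hS hs) (hT ht)

lemma mulSpan_closedSpan_left (S T : Set L) : mulSpan (closedSpan S) T = mulSpan S T := by
  refine le_antisymm (mulSpan_le (isClosed_closedSpan _) fun p hp t ht => ?_)
    (mulSpan_mono (subset_closedSpan S) subset_rfl)
  exact map_mem_of_mem_closedSpan ((ContinuousLinearMap.mul ℂ L).flip t) (isClosed_closedSpan _)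
    (fun s hs => mem_mulSpan hs ht) hp

lemma mulSpan_closedSpan_right (S T : Set L) : mulSpan S (closedSpan T) = mulSpan S T := by
  refine le_antisymm (mulSpan_le (isClosed_closedSpan _) fun s hs p hp => ?_)
    (mulSpan_mono subset_rfl (subset_closedSpan T))
  exact map_mem_of_mem_closedSpan (ContinuousLinearMap.mul ℂ L s) (isClosed_closedSpan _)
    (fun t ht => mem_mulSpan hs ht) hp

lemma mulSpan_assoc (S T U : Set L) : mulSpan (mulSpan S T) U = mulSpan S (mulSpan T U) := by
  calc mulSpan (mulSpan S T) U = mulSpan (image2 (· * ·) S T) U := mulSpan_closedSpan_left _ _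
    _ = mulSpan S (image2 (· * ·) T U) := congrArg closedSpan (image2_assoc mul_assoc)
    _ = mulSpan S (mulSpan T U) := (mulSpan_closedSpan_right _ _).symm

end ClosedSpan

namespace Submodule

variable {E : Type*} [AddCommMonoid E] [Module ℂ E] [StarAddMonoid E] [StarModule ℂ E]

instance : InvolutiveStar (Submodule ℂ E) where
  star M :=
    { carrier := star ⁻¹' M
      add_mem' {x y} hx hy := by simpa [star_add] using M.add_mem hx hy
      zero_mem' := by simp
      smul_mem' c x hx := by simpa [star_smul] using M.smul_mem (star c) hx }
  star_involutive M := SetLike.ext fun x => by simp [← SetLike.mem_coe]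

@[simp]
lemma mem_star {M : Submodule ℂ E} {x : E} : x ∈ star M ↔ star x ∈ M :=
  Iff.rfl

lemma star_mono {M N : Submodule ℂ E} (h : M ≤ N) : star M ≤ star N :=
  fun _ hx => h hx

lemma coe_star (M : Submodule ℂ E) : ((star M : Submodule ℂ E) : Set E) = star '' M :=
  image_star.symm

end Submodule

local notation:70 P:70 " ⋅ " Q:71 => mulSpan (SetLike.coe P) (SetLike.coe Q)

lemma star_mulSpan_le_mulSpan_star {L : Type*} [NormedRing L] [StarRing L] [NormedStarGroup L]
    [NormedAlgebra ℂ L] [StarModule ℂ L] (P Q : Submodule ℂ L) :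
    star (P ⋅ Q) ≤ star Q ⋅ star P := by
  intro x hx
  have hle : P ⋅ Q ≤ star (star Q ⋅ star P) := by
    refine closedSpan_le ((isClosed_closedSpan _).preimage continuous_star) ?_
    rintro _ ⟨p, hp, q, hq, rfl⟩
    rw [SetLike.mem_coe, Submodule.mem_star, star_mul]
    exact mem_mulSpan (by simpa using hq) (by simpa using hp)
  simpa using hle hx

lemma mul_one_sub_pow_mul_succ_le {u : ℝ} (h0 : 0 ≤ u) (h1 : u ≤ 1) (m : ℕ) :
    u * (1 - u) ^ m * (m + 1) ≤ 1 := by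
  have hpos : 0 ≤ (1 - u) ^ m := pow_nonneg (by linarith) m
  calc u * (1 - u) ^ m * (m + 1) = (1 - u) ^ m * (m * u + u) := by ring
    _ ≤ (1 - u) ^ m * (1 + m * u) := mul_le_mul_of_nonneg_left (by linarith) hpos
    _ ≤ (1 - u) ^ m * (1 + u) ^ m := by gcongr; exact one_add_mul_le_pow (by linarith) m
    _ = (1 - u ^ 2) ^ m := by rw [← mul_pow]; ring
    _ ≤ 1 := pow_le_one₀ (by nlinarith) (by nlinarith)

lemma one_sub_pow_one_sub_smul_mem_span {R A : Type*} [CommRing R] [Ring A] [Algebra R A]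
    (r : R) (a : A) (n : ℕ) :
    1 - (1 - r • a) ^ n ∈ Submodule.span R (range fun k : ℕ => a ^ (k + 1)) := by
  set V := Submodule.span R (range fun k : ℕ => a ^ (k + 1))
  have hmul : ∀ v ∈ V, v * a ∈ V := fun v hv => by
    induction hv using Submodule.span_induction with
    | mem v hv =>
      obtain ⟨k, rfl⟩ := hv
      exact Submodule.subset_span ⟨k + 1, pow_succ a (k + 1)⟩
    | zero => simp
    | add u v _ _ hu hv => simpa [add_mul] using V.add_mem hu hv
    | smul c v _ hv => simpa [smul_mul_assoc] using V.smul_mem c hv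
  induction n with
  | zero => simp
  | succ n ih =>
    have ha : a ∈ V := Submodule.subset_span ⟨0, pow_one a⟩
    have key : 1 - (1 - r • a) ^ (n + 1)
        = (1 - (1 - r • a) ^ n) + r • (a - (1 - (1 - r • a) ^ n) * a) := by
      simp only [pow_succ, mul_sub, sub_mul, mul_one, one_mul, mul_smul_comm, smul_sub]
      abel
    rw [key]
    exact V.add_mem ih (V.smul_mem r (V.sub_mem ha (hmul _ ih)))

lemma mul_mem_span_range_mul {R A ι : Type*} [CommSemiring R] [Semiring A] [Algebra R A]
    {f : ι → A} {v : A} (x : A) (hv : v ∈ Submodule.span R (range f)) :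
    x * v ∈ Submodule.span R (range fun i => x * f i) := by
  have := Submodule.mem_map_of_mem (f := LinearMap.mulLeft R x) hv
  rwa [Submodule.map_span, ← range_comp] at this

section CStarAlgebra

variable {L : Type*} [CStarAlgebra L]

lemma norm_mul_pow_sq_eq {x b : L} (hb : IsSelfAdjoint b) (hcomm : Commute (star x * x) b)
    (n : ℕ) : ‖x * b ^ n‖ ^ 2 = ‖star x * x * b ^ (2 * n)‖ := by
  rw [sq, ← CStarRing.norm_star_mul_self, star_mul, (hb.pow n).star_eq]
  congr 1
  calc b ^ n * star x * (x * b ^ n) = b ^ n * (star x * x) * b ^ n := by simp only [mul_assoc]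
    _ = star x * x * b ^ (2 * n) := by
      rw [← (hcomm.pow_right n).eq, mul_assoc, ← pow_add, two_mul]

lemma norm_mul_one_sub_smul_pow_sq_le (x : L) (n : ℕ) :
    ‖x * (1 - (‖x‖ ^ 2)⁻¹ • (star x * x)) ^ n‖ ^ 2 ≤ ‖x‖ ^ 2 / (2 * n + 1) := by
  rcases eq_or_ne x 0 with rfl | hx
  · simp
  have : Nontrivial L := ⟨⟨x, 0, hx⟩⟩
  set a := star x * x
  set M := ‖x‖ ^ 2
  set b := 1 - M⁻¹ • a
  have hM : 0 < M := by positivity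
  have ha : IsSelfAdjoint a := .star_mul_self x
  have hb : IsSelfAdjoint b := .sub (.one L) ((IsSelfAdjoint.all _).smul ha)
  have hspec : ∀ t ∈ spectrum ℝ a, 0 ≤ t ∧ t ≤ M := fun t ht =>
    ⟨spectrum_star_mul_self_nonneg t ht, by
      have := spectrum.norm_le_norm_of_mem ht
      rw [CStarRing.norm_star_mul_self, ← sq] at this
      exact (le_abs_self t).trans this⟩
  have hcfc : cfc (fun t : ℝ => t * (1 - M⁻¹ * t) ^ (2 * n)) a = a * b ^ (2 * n) := by
    rw [cfc_mul _ _ a, cfc_pow _ _ a, cfc_sub _ _ a, cfc_const_one ℝ a, cfc_const_mul_id _ a,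
      cfc_id' ℝ a]
  have hcomm : Commute a b := (Commute.one_right a).sub_right ((Commute.refl a).smul_right _)
  rw [norm_mul_pow_sq_eq hb hcomm, ← hcfc]
  refine norm_cfc_le (by positivity) fun t ht => ?_
  obtain ⟨ht0, htM⟩ := hspec t ht
  have hu := mul_one_sub_pow_mul_succ_le (div_nonneg ht0 hM.le) ((div_le_one hM).2 htM) (2 * n)
  rw [Real.norm_eq_abs, abs_of_nonneg (mul_nonneg ht0 ((even_two_mul n).pow_nonneg _)),
    le_div_iff₀ (by positivity)]
  calc t * (1 - M⁻¹ * t) ^ (2 * n) * (2 * n + 1)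
      = M * (t / M * (1 - t / M) ^ (2 * n) * ((2 * n : ℕ) + 1)) := by
        field_simp; push_cast; ring
    _ ≤ M := by nlinarith

/-- With `b = 1 - (x⋆x)/‖x‖²`, each `x (1 - bⁿ)` is `x` times a polynomial in `x⋆x` without
constant term, while `‖x bⁿ‖² ≤ ‖x‖² / (2n + 1)`. -/
lemma mem_closedSpan_range_mul_star_mul_pow (x : L) :
    x ∈ closedSpan (range fun k : ℕ => x * (star x * x) ^ (k + 1)) := by
  set b := 1 - (‖x‖ ^ 2)⁻¹ • (star x * x)
  set P := closedSpan (range fun k : ℕ => x * (star x * x) ^ (k + 1))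
  have hmem (n : ℕ) : x * (1 - b ^ n) ∈ P :=
    Submodule.le_topologicalClosure _ <| Submodule.span_le_restrictScalars ℝ ℂ _ <|
      mul_mem_span_range_mul x (one_sub_pow_one_sub_smul_mem_span _ _ n)
  have hsq : Tendsto (fun n : ℕ => ‖x * b ^ n‖ ^ 2) atTop (𝓝 0) :=
    squeeze_zero (fun n => by positivity) (norm_mul_one_sub_smul_pow_sq_le x) <|
      tendsto_const_nhds.div_atTop
        ((tendsto_natCast_atTop_atTop.const_mul_atTop two_pos).atTop_add tendsto_const_nhds)
  have hsmall : Tendsto (fun n : ℕ => x * b ^ n) atTop (𝓝 0) := by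
    rw [tendsto_zero_iff_norm_tendsto_zero]
    simpa [Function.comp_def, Real.sqrt_sq (norm_nonneg _)] using
      (Real.continuous_sqrt.tendsto' 0 0 Real.sqrt_zero).comp hsq
  have hlim : Tendsto (fun n : ℕ => x * (1 - b ^ n)) atTop (𝓝 x) := by
    simpa [mul_sub] using tendsto_const_nhds.sub hsmall
  exact (Submodule.isClosed_topologicalClosure _).mem_of_tendsto hlim (Eventually.of_forall hmem)

lemma le_mulSpan_mulSpan_star (M : Submodule ℂ L)
    (hM : ∀ x ∈ M, ∀ y ∈ M, x * star x * y ∈ M) :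
    M ≤ (M ⋅ star M) ⋅ M := by
  intro x hx
  have hpow : ∀ k : ℕ, (x * star x) ^ k * x ∈ M := fun k => by
    induction k with
    | zero => simpa using hx
    | succ k ih => simpa [pow_succ', mul_assoc] using hM x hx _ ih
  refine closedSpan_le (isClosed_closedSpan _) ?_ (mem_closedSpan_range_mul_star_mul_pow x)
  rintro _ ⟨k, rfl⟩
  dsimp only
  rw [← mul_pow_mul, pow_succ', mul_assoc]
  exact mem_mulSpan (mem_mulSpan hx (by simpa using hx)) (hpow k)

end CStarAlgebra

section Bundles

variable {G L : Type*} [Group G] [CStarAlgebra L]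

structure IsFellBundle (B : G → Submodule ℂ L) : Prop where
  isClosed (t : G) : IsClosed (B t : Set L)
  mul_mem {r s : G} {b c : L} : b ∈ B r → c ∈ B s → b * c ∈ B (r * s)
  star_mem {t : G} {b : L} : b ∈ B t → star b ∈ B t⁻¹

def IsSaturated (B : G → Submodule ℂ L) : Prop :=
  ∀ r s : G, B r ⋅ B s = B (r * s)

structure IsStrongEquivalenceBundle (A B X : G → Submodule ℂ L) : Prop where
  isClosed (t : G) : IsClosed (X t : Set L)
  mul_mem_left {r s : G} {a x : L} : a ∈ A r → x ∈ X s → a * x ∈ X (r * s)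
  mul_mem_right {r s : G} {x b : L} : x ∈ X r → b ∈ B s → x * b ∈ X (r * s)
  star_mul_mem {r s : G} {x y : L} : x ∈ X r → y ∈ X s → star x * y ∈ B (r⁻¹ * s)
  mul_star_mem {r s : G} {x y : L} : x ∈ X r → y ∈ X s → x * star y ∈ A (r * s⁻¹)
  star_mulSpan_self (t : G) : star (X t) ⋅ X t = star (B t) ⋅ B t
  mulSpan_self_star (t : G) : X t ⋅ star (X t) = A t ⋅ star (A t)

namespace IsFellBundle

variable {B : G → Submodule ℂ L}

lemma star_eq (hB : IsFellBundle B) (t : G) : star (B t) = B t⁻¹ :=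
  SetLike.ext fun _ =>
    ⟨fun hb => by simpa using hB.star_mem hb, fun hb => by simpa using hB.star_mem hb⟩

lemma mulSpan_le (hB : IsFellBundle B) (r s : G) : B r ⋅ B s ≤ B (r * s) :=
  _root_.mulSpan_le (hB.isClosed _) fun _ hb _ hc => hB.mul_mem hb hc

lemma le_mulSpan_mulSpan_star (hB : IsFellBundle B) (t : G) :
    B t ≤ (B t ⋅ star (B t)) ⋅ B t :=
  _root_.le_mulSpan_mulSpan_star _ fun _ hb _ hc => by
    simpa using hB.mul_mem (hB.mul_mem hb (hB.star_mem hb)) hc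

end IsFellBundle

namespace IsStrongEquivalenceBundle

variable {A B X : G → Submodule ℂ L}

lemma mulSpan_left_le (hX : IsStrongEquivalenceBundle A B X) (r s : G) :
    A r ⋅ X s ≤ X (r * s) :=
  _root_.mulSpan_le (hX.isClosed _) fun _ ha _ hx => hX.mul_mem_left ha hx

lemma mulSpan_right_le (hX : IsStrongEquivalenceBundle A B X) (r s : G) :
    X r ⋅ B s ≤ X (r * s) :=
  _root_.mulSpan_le (hX.isClosed _) fun _ hx _ hb => hX.mul_mem_right hx hb

lemma star_mulSpan_le (hB : IsFellBundle B) (hX : IsStrongEquivalenceBundle A B X) (r s : G) :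
    star (X r) ⋅ X s ≤ B (r⁻¹ * s) :=
  _root_.mulSpan_le (hB.isClosed _) fun x hx _ hy => by
    simpa using hX.star_mul_mem (Submodule.mem_star.1 hx) hy

lemma le_mulSpan_mulSpan_star (hX : IsStrongEquivalenceBundle A B X) (t : G) :
    X t ≤ (X t ⋅ star (X t)) ⋅ X t :=
  _root_.le_mulSpan_mulSpan_star _ fun _ hx _ hy => by
    simpa using hX.mul_mem_left (hX.mul_star_mem hx hx) hy

lemma le_mulSpan_left (hA : IsFellBundle A) (hX : IsStrongEquivalenceBundle A B X) (t : G) :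
    X t ≤ A t ⋅ X 1 :=
  calc X t ≤ (X t ⋅ star (X t)) ⋅ X t := hX.le_mulSpan_mulSpan_star t
    _ = A t ⋅ (A t⁻¹ ⋅ X t) := by rw [hX.mulSpan_self_star, mulSpan_assoc, hA.star_eq]
    _ ≤ A t ⋅ X 1 := mulSpan_mono subset_rfl (by simpa using hX.mulSpan_left_le t⁻¹ t)

lemma le_mulSpan_right (hB : IsFellBundle B) (hX : IsStrongEquivalenceBundle A B X) (t : G) :
    X t ≤ X 1 ⋅ B t :=
  calc X t ≤ (X t ⋅ star (X t)) ⋅ X t := hX.le_mulSpan_mulSpan_star t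
    _ = (X t ⋅ B t⁻¹) ⋅ B t := by
      rw [mulSpan_assoc, hX.star_mulSpan_self, ← mulSpan_assoc, hB.star_eq]
    _ ≤ X 1 ⋅ B t := mulSpan_mono (by simpa using hX.mulSpan_right_le t t⁻¹) subset_rfl

lemma le_star_mulSpan (hB : IsFellBundle B) (hX : IsStrongEquivalenceBundle A B X) (t : G) :
    B t ≤ star (X t⁻¹) ⋅ X 1 :=
  calc B t ≤ (B t ⋅ star (B t)) ⋅ B t := hB.le_mulSpan_mulSpan_star t
    _ = (star (B t⁻¹) ⋅ B t⁻¹) ⋅ B t := by rw [hB.star_eq, hB.star_eq, inv_inv]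
    _ = star (X t⁻¹) ⋅ (X t⁻¹ ⋅ B t) := by rw [← hX.star_mulSpan_self, mulSpan_assoc]
    _ ≤ star (X t⁻¹) ⋅ X 1 :=
      mulSpan_mono subset_rfl (by simpa using hX.mulSpan_right_le t⁻¹ t)

lemma star_mulSpan_le_mulSpan (hB : IsFellBundle B) (hX : IsStrongEquivalenceBundle A B X)
    (r s : G) : star (X r⁻¹) ⋅ X s ≤ B r ⋅ B s :=
  calc star (X r⁻¹) ⋅ X s ≤ star (X r⁻¹) ⋅ (X 1 ⋅ B s) :=
        mulSpan_mono subset_rfl (hX.le_mulSpan_right hB s)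
    _ = (star (X r⁻¹) ⋅ X 1) ⋅ B s := (mulSpan_assoc _ _ _).symm
    _ ≤ B r ⋅ B s := mulSpan_mono (by simpa using hX.star_mulSpan_le hB r⁻¹ 1) subset_rfl

lemma le_mulSpan_left_of_isSaturated (hA : IsFellBundle A)
    (hX : IsStrongEquivalenceBundle A B X) (hAsat : IsSaturated A) (r s : G) :
    X (r * s) ≤ A r ⋅ X s :=
  calc X (r * s) ≤ A (r * s) ⋅ X 1 := hX.le_mulSpan_left hA _
    _ = A r ⋅ (A s ⋅ X 1) := by rw [← hAsat, mulSpan_assoc]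
    _ ≤ A r ⋅ X s := mulSpan_mono subset_rfl (by simpa using hX.mulSpan_left_le s 1)

lemma isSaturated_of_isSaturated (hA : IsFellBundle A) (hB : IsFellBundle B)
    (hX : IsStrongEquivalenceBundle A B X) (hAsat : IsSaturated A) : IsSaturated B := by
  intro r s
  refine le_antisymm (hB.mulSpan_le r s) ?_
  have hstar : star (X (r * s)⁻¹) ≤ star (X r⁻¹) ⋅ A s :=
    calc star (X (r * s)⁻¹) ≤ star (A s⁻¹ ⋅ X r⁻¹) := by
          rw [mul_inv_rev]
          exact Submodule.star_mono (hX.le_mulSpan_left_of_isSaturated hA hAsat _ _)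
      _ ≤ star (X r⁻¹) ⋅ star (A s⁻¹) := star_mulSpan_le_mulSpan_star _ _
      _ = star (X r⁻¹) ⋅ A s := by rw [hA.star_eq, inv_inv]
  calc B (r * s) ≤ star (X (r * s)⁻¹) ⋅ X 1 := hX.le_star_mulSpan hB _
    _ ≤ (star (X r⁻¹) ⋅ A s) ⋅ X 1 := mulSpan_mono hstar subset_rfl
    _ = star (X r⁻¹) ⋅ (A s ⋅ X 1) := mulSpan_assoc _ _ _
    _ ≤ star (X r⁻¹) ⋅ X s := mulSpan_mono subset_rfl (by simpa using hX.mulSpan_left_le s 1)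
    _ ≤ B r ⋅ B s := hX.star_mulSpan_le_mulSpan hB r s

lemma dual (hA : IsFellBundle A) (hB : IsFellBundle B) (hX : IsStrongEquivalenceBundle A B X) :
    IsStrongEquivalenceBundle B A fun t => star (X t⁻¹) where
  isClosed t := (hX.isClosed t⁻¹).preimage continuous_star
  mul_mem_left hb hy := by simpa using hX.mul_mem_right (Submodule.mem_star.1 hy) (hB.star_mem hb)
  mul_mem_right hy ha := by simpa using hX.mul_mem_left (hA.star_mem ha) (Submodule.mem_star.1 hy)
  star_mul_mem hy hz := by
    simpa using hX.mul_star_mem (Submodule.mem_star.1 hy) (Submodule.mem_star.1 hz)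
  mul_star_mem hy hz := by
    simpa using hX.star_mul_mem (Submodule.mem_star.1 hy) (Submodule.mem_star.1 hz)
  star_mulSpan_self t := by rw [star_star, hX.mulSpan_self_star, hA.star_eq, hA.star_eq, inv_inv]
  mulSpan_self_star t := by rw [star_star, hX.star_mulSpan_self, hB.star_eq, hB.star_eq, inv_inv]

end IsStrongEquivalenceBundle

end Bundles

/-- Saturation is invariant under strong equivalence: if `(X t)` is a concrete
strong `(A t)`–`(B t)` equivalence bundle, then `(A t)` is saturated iff `(B t)` is.
-/
theorem saturated_iff_saturated_of_strongEquivalence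
    {G L : Type*} [Group G] [NormedRing L] [StarRing L] [CStarRing L]
    [NormedAlgebra ℂ L] [StarModule ℂ L] [CompleteSpace L]
    (A B X : G → Submodule ℂ L)
    (hAclosed : ∀ t : G, IsClosed (A t : Set L))
    (hAmul : ∀ r s : G, ∀ a ∈ A r, ∀ a' ∈ A s, a * a' ∈ A (r * s))
    (hAstar : ∀ t : G, ∀ a ∈ A t, star a ∈ A t⁻¹)
    (hBclosed : ∀ t : G, IsClosed (B t : Set L))
    (hBmul : ∀ r s : G, ∀ b ∈ B r, ∀ c ∈ B s, b * c ∈ B (r * s))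
    (hBstar : ∀ t : G, ∀ b ∈ B t, star b ∈ B t⁻¹)
    (hXclosed : ∀ t : G, IsClosed (X t : Set L))
    (hXactL : ∀ r s : G, ∀ a ∈ A r, ∀ x ∈ X s, a * x ∈ X (r * s))
    (hXactR : ∀ r s : G, ∀ x ∈ X r, ∀ b ∈ B s, x * b ∈ X (r * s))
    (hXinnerR : ∀ r s : G, ∀ x ∈ X r, ∀ y ∈ X s, star x * y ∈ B (r⁻¹ * s))
    (hXinnerL : ∀ r s : G, ∀ x ∈ X r, ∀ y ∈ X s, x * star y ∈ A (r * s⁻¹))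
    (hsfullR : ∀ t : G,
      mulSpan (star '' (X t : Set L)) (X t : Set L)
        = mulSpan (star '' (B t : Set L)) (B t : Set L))
    (hsfullL : ∀ t : G,
      mulSpan (X t : Set L) (star '' (X t : Set L))
        = mulSpan (A t : Set L) (star '' (A t : Set L))) :
    (∀ r s : G, mulSpan (A r : Set L) (A s : Set L) = A (r * s)) ↔
      (∀ r s : G, mulSpan (B r : Set L) (B s : Set L) = B (r * s)) := by
  let _ : CStarAlgebra L := {}
  have hA : IsFellBundle A := ⟨hAclosed, (hAmul _ _ _ · _ ·), hAstar _ _⟩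
  have hB : IsFellBundle B := ⟨hBclosed, (hBmul _ _ _ · _ ·), hBstar _ _⟩
  have hX : IsStrongEquivalenceBundle A B X :=
    ⟨hXclosed, (hXactL _ _ _ · _ ·), (hXactR _ _ _ · _ ·), (hXinnerR _ _ _ · _ ·),
      (hXinnerL _ _ _ · _ ·),
      fun t => by simpa only [Submodule.coe_star] using hsfullR t,
      fun t => by simpa only [Submodule.coe_star] using hsfullL t⟩
  exact ⟨hX.isSaturated_of_isSaturated hA hB, (hX.dual hA hB).isSaturated_of_isSaturated hB hA⟩
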